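/- Let K be a complete discrete valuation field with perfect residue field k of characteristic p > 0, and let k' be a perfect field extension of k realized as the union of a filtered directed system of perfect field subextensions k_λ. Then the colimit colim_λ K(k_λ) (where K(k_λ) = W(k_λ) ⊗̂_{W(k)} O_K ⊗_{O_K} K) is a henselian discrete valuation field whose completion is K(k'); in particular, its residue field is k' and its value group is ℤ with the valuation restricting to the normalized valuation on each K(k_λ). -/

import Mathlib

/-!
Every element of `S = ⋃ i, F i` lies in some `F i`, where it is a unit times a power of `π`;
since units and factorizations of `π` in `S` are already visible at a finite level, `π` stays
irreducible in `S`, so `S` is a discrete valuation ring with uniformizer `π`, and every inclusion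
`F i → S` is local. A monic polynomial over `S` together with an approximate simple root descends
to some `F i`, which is complete and hence henselian; the root found there is a root in `S`.
Density in `O` follows by successive approximation: `x ≡ y mod π` with `y ∈ S`, then apply
the same to `(x - y) / π`.
-/

open IsLocalRing Polynomial

theorem IsDiscreteValuationRing.isLocalHom_of_not_isUnit_map {R S : Type*} [CommRing R]
    [IsDomain R] [IsDiscreteValuationRing R] [CommRing S] (f : R →+* S) {ϖ : R}
    (hϖ : Irreducible ϖ) (hf : ¬IsUnit (f ϖ)) : IsLocalHom f := by
  refine ⟨fun x hx => ?_⟩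
  by_cases hx0 : x = 0
  · rw [hx0, map_zero, isUnit_zero_iff] at hx
    have := subsingleton_of_zero_eq_one hx
    exact absurd (isUnit_of_subsingleton _) hf
  obtain ⟨n, u, rfl⟩ := eq_unit_mul_pow_irreducible hx0 hϖ
  rw [map_mul, map_pow, IsUnit.mul_iff] at hx
  obtain rfl : n = 0 := by
    by_contra hn
    exact hf ((isUnit_pow_iff hn).mp hx.2)
  simp

theorem HenselianLocalRing.of_henselianRing (R : Type*) [CommRing R] [IsLocalRing R]
    [HenselianRing R (maximalIdeal R)] : HenselianLocalRing R where
  is_henselian f hf a₀ h₁ h₂ := HenselianRing.is_henselian f hf a₀ h₁ (h₂.map _)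

theorem Subring.exists_sub_mem_span_singleton_pow {R : Type*} [CommRing R] (S : Subring R)
    {π : R} (hπ : π ∈ S) (h : ∀ x, ∃ y ∈ S, x - y ∈ Ideal.span {π}) (x : R) (n : ℕ) :
    ∃ y ∈ S, x - y ∈ Ideal.span {π} ^ n := by
  simp only [Ideal.span_singleton_pow, Ideal.mem_span_singleton] at h ⊢
  induction n with
  | zero => exact ⟨0, zero_mem _, by simp⟩
  | succ n ih =>
    obtain ⟨y, hy, z, hz⟩ := ih
    obtain ⟨w, hw, t, ht⟩ := h z
    refine ⟨y + π ^ n * w, add_mem hy (mul_mem (pow_mem hπ n) hw), t, ?_⟩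
    rw [← sub_sub, hz, ← mul_sub, ht]
    ring

namespace Subring

variable {R : Type*} [CommRing R] {ι : Type*} [Nonempty ι] {F : ι → Subring R}

theorem exists_isUnit_inclusion_of_isUnit_iSup (hdir : Directed (· ≤ ·) F) {i : ι} {x : F i}
    (hx : IsUnit (inclusion (le_iSup F i) x)) :
    ∃ j, ∃ hij : F i ≤ F j, IsUnit (inclusion hij x) := by
  obtain ⟨u, hu⟩ := hx
  obtain ⟨k, hk⟩ := (mem_iSup_of_directed hdir).mp (↑u⁻¹ : ↥(⨆ i, F i)).2
  obtain ⟨j, hij, hkj⟩ := hdir i k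
  refine ⟨j, hij, .of_mul_eq_one ⟨_, hkj hk⟩ (Subtype.ext ?_)⟩
  have h := congrArg Subtype.val u.mul_inv
  rwa [hu] at h

theorem exists_lifts_inclusion_iSup (hdir : Directed (· ≤ ·) F) (f : (⨆ i, F i : Subring R)[X])
    (a : ↥(⨆ i, F i)) :
    ∃ i, f ∈ lifts (inclusion (le_iSup F i)) ∧ (a : R) ∈ F i := by
  classical
  obtain ⟨i, hi⟩ := Directed.exists_mem_subset_of_finset_subset_biUnion
    (f := fun i => (F i : Set R)) hdir (s := (insert a f.coeffs).image Subtype.val) (by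
      rw [← coe_iSup_of_directed hdir]
      intro x hx
      obtain ⟨c, -, rfl⟩ := Finset.mem_image.mp hx
      exact c.2)
  simp only [Finset.coe_image, Finset.coe_insert, Set.image_insert_eq, Set.insert_subset_iff] at hi
  refine ⟨i, ?_, hi.1⟩
  rw [lifts_iff_coeffs_subset_range]
  intro c hc
  exact ⟨⟨c, hi.2 ⟨c, hc, rfl⟩⟩, rfl⟩

theorem irreducible_mk_iSup_of_directed (hdir : Directed (· ≤ ·) F) {π : R} (hπ : ∀ i, π ∈ F i)
    (hirr : ∀ i, Irreducible (⟨π, hπ i⟩ : F i)) (hπS : π ∈ ⨆ i, F i) :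
    Irreducible (⟨π, hπS⟩ : ↥(⨆ i, F i)) := by
  refine ⟨fun hu => ?_, fun a b hab => ?_⟩
  · obtain ⟨j, _, hj⟩ := exists_isUnit_inclusion_of_isUnit_iSup hdir
      (x := ⟨π, hπ (Classical.arbitrary ι)⟩) hu
    exact (hirr j).not_isUnit hj
  · obtain ⟨ia, ha⟩ := (mem_iSup_of_directed hdir).mp a.2
    obtain ⟨ib, hb⟩ := (mem_iSup_of_directed hdir).mp b.2
    obtain ⟨m, hma, hmb⟩ := hdir ia ib
    have hab' : (⟨π, hπ m⟩ : F m) = ⟨a, hma ha⟩ * ⟨b, hmb hb⟩ :=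
      Subtype.ext (congrArg Subtype.val hab :)
    exact ((hirr m).isUnit_or_isUnit hab').imp (·.map (inclusion (le_iSup F m)))
      (·.map (inclusion (le_iSup F m)))

theorem isDiscreteValuationRing_iSup_of_directed [IsDomain R]
    [∀ i, IsDiscreteValuationRing (F i)] (hdir : Directed (· ≤ ·) F) {π : R}
    (hπ : ∀ i, π ∈ F i) (hirr : ∀ i, Irreducible (⟨π, hπ i⟩ : F i)) :
    IsDiscreteValuationRing ↥(⨆ i, F i) := by
  refine .ofHasUnitMulPowIrreducibleFactorization
    ⟨_, irreducible_mk_iSup_of_directed hdir hπ hirr (le_iSup F (Classical.arbitrary ι) (hπ _)),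
      fun {x} hx => ?_⟩
  obtain ⟨m, hm⟩ := (mem_iSup_of_directed hdir).mp x.2
  have hx' : (⟨x, hm⟩ : F m) ≠ 0 := fun h => hx (Subtype.ext (congrArg Subtype.val h :))
  obtain ⟨n, hn⟩ := IsDiscreteValuationRing.associated_pow_irreducible hx' (hirr m)
  exact ⟨n, hn.symm.map (inclusion (le_iSup F m))⟩

theorem henselianLocalRing_iSup_of_directed (hdir : Directed (· ≤ ·) F)
    [∀ i, HenselianLocalRing (F i)] [IsLocalRing ↥(⨆ i, F i)]
    [∀ i, IsLocalHom (inclusion (le_iSup F i))] : HenselianLocalRing ↥(⨆ i, F i) := by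
  refine ⟨fun f hf a₀ h₁ h₂ => ?_⟩
  obtain ⟨i, hlift, ha₀⟩ := exists_lifts_inclusion_iSup hdir f a₀
  set φ := inclusion (le_iSup F i)
  obtain ⟨q, rfl, -, hqm⟩ := lifts_and_degree_eq_and_monic hlift hf
  set b₀ : F i := ⟨a₀, ha₀⟩
  have heval (r : (F i)[X]) : (r.map φ).eval a₀ = φ (r.eval b₀) :=
    eval_map_apply φ b₀
  rw [heval] at h₁
  rw [derivative_map, heval] at h₂
  obtain ⟨b, hb, hbb₀⟩ := HenselianLocalRing.is_henselian q hqm b₀ (fun h => h₁ (h.map φ))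
    (isUnit_of_map_unit φ _ h₂)
  refine ⟨φ b, by rw [IsRoot, eval_map_apply, hb.eq_zero, map_zero], ?_⟩
  exact map_sub φ b b₀ ▸ map_nonunit φ _ hbb₀

end Subring

theorem stmt_13_general (O : Type*) [CommRing O] [IsDomain O] [IsDiscreteValuationRing O]
    (π : O) (hπ : Irreducible π)
    {ι : Type*} [Nonempty ι] (F : ι → Subring O) (hdir : Directed (· ≤ ·) F)
    (hπF : ∀ i, π ∈ F i)
    (hdvrF : ∀ i, IsDiscreteValuationRing (F i))
    (hmaxF : ∀ i, @maximalIdeal (F i) _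
        (@IsDiscreteValuationRing.toIsLocalRing _ _ _ (hdvrF i)) = Ideal.span {⟨π, hπF i⟩})
    (hcompF : ∀ i, IsAdicComplete (@maximalIdeal (F i) _
        (@IsDiscreteValuationRing.toIsLocalRing _ _ _ (hdvrF i))) (F i))
    (hres : ∀ x : O, ∃ i, ∃ y : F i, x - ↑y ∈ maximalIdeal O) :
    ∃ hdvr : IsDiscreteValuationRing ↥(⨆ i, F i),
      HenselianLocalRing ↥(⨆ i, F i) ∧
      @maximalIdeal ↥(⨆ i, F i) _ (@IsDiscreteValuationRing.toIsLocalRing _ _ _ hdvr) =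
        Ideal.span {⟨π, le_iSup F (Classical.arbitrary ι) (hπF _)⟩} ∧
      (∀ (x : O) (n : ℕ), ∃ y ∈ ⨆ i, F i, x - y ∈ maximalIdeal O ^ n) := by
  have hirrF (i : ι) : Irreducible (⟨π, hπF i⟩ : F i) :=
    (IsDiscreteValuationRing.irreducible_iff_uniformizer _).mpr (hmaxF i)
  have hπS := le_iSup F (Classical.arbitrary ι) (hπF _)
  have hirrS := Subring.irreducible_mk_iSup_of_directed hdir hπF hirrF hπS
  have hdvr := Subring.isDiscreteValuationRing_iSup_of_directed hdir hπF hirrF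
  have (i : ι) : IsLocalHom (Subring.inclusion (le_iSup F i)) :=
    IsDiscreteValuationRing.isLocalHom_of_not_isUnit_map _ (hirrF i) hirrS.not_isUnit
  have (i : ι) : HenselianLocalRing (F i) := .of_henselianRing _
  refine ⟨hdvr, Subring.henselianLocalRing_iSup_of_directed hdir,
    (IsDiscreteValuationRing.irreducible_iff_uniformizer _).mp hirrS, ?_⟩
  rw [(IsDiscreteValuationRing.irreducible_iff_uniformizer π).mp hπ] at hres ⊢
  refine Subring.exists_sub_mem_span_singleton_pow _ hπS (fun x => ?_)
  obtain ⟨i, y, hy⟩ := hres x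
  exact ⟨y, le_iSup F i y.2, hy⟩

/-- Let `O = O_K(k')` be a complete discrete valuation ring (with uniformizer `π` coming
from `K`), and let `F i = O_K(k_λ) ⊆ O` be a directed family of complete discrete
valuation subrings, each containing `π` with maximal ideal generated by `π` (the same
uniformizer, ramification index 1), whose union is dense modulo `𝔪_O` (the residue field
`k'` is the union of the `k_λ`).  Then the directed union `⋃ i, F i = colim_λ O_K(k_λ)`
is a henselian discrete valuation ring with maximal ideal generated by `π` (so its
fraction field `colim_λ K(k_λ)` is a henselian discrete valuation field, with value group
`ℤ` and valuation restricting to the normalized valuation at each level), and it is dense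
in `O` for the adic topology, i.e. `O = O_K(k')` is its completion. -/
theorem stmt_13 (O : Type*) [CommRing O] [IsDomain O] [IsDiscreteValuationRing O]
    [IsAdicComplete (maximalIdeal O) O]
    (π : O) (hπ : Irreducible π)
    {ι : Type*} [Nonempty ι] (F : ι → Subring O) (hdir : Directed (· ≤ ·) F)
    (hπF : ∀ i, π ∈ F i)
    (hdvrF : ∀ i, IsDiscreteValuationRing (F i))
    (hmaxF : ∀ i, @maximalIdeal (F i) _
        (@IsDiscreteValuationRing.toIsLocalRing _ _ _ (hdvrF i)) = Ideal.span {⟨π, hπF i⟩})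
    (hcompF : ∀ i, IsAdicComplete (@maximalIdeal (F i) _
        (@IsDiscreteValuationRing.toIsLocalRing _ _ _ (hdvrF i))) (F i))
    (hres : ∀ x : O, ∃ i, ∃ y : F i, x - ↑y ∈ maximalIdeal O) :
    ∃ hdvr : IsDiscreteValuationRing ↥(⨆ i, F i),
      HenselianLocalRing ↥(⨆ i, F i) ∧
      @maximalIdeal ↥(⨆ i, F i) _ (@IsDiscreteValuationRing.toIsLocalRing _ _ _ hdvr) =
        Ideal.span {⟨π, le_iSup F (Classical.arbitrary ι) (hπF _)⟩} ∧
      (∀ (x : O) (n : ℕ), ∃ y ∈ ⨆ i, F i, x - y ∈ maximalIdeal O ^ n) :=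
  stmt_13_general O π hπ F hdir hπF hdvrF hmaxF hcompF hres
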